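/- arXiv:1807.10976 — 6 statements merged into one kernel-verified Lean document; each statement's English description precedes it below -/
import Mathlib

section
/- For every finite ℝ>0-edge-labelled graph A there exists a finite ℝ>0-edge-labelled graph B containing A as an induced subgraph such that every partial automorphism of A extends to an automorphism of B. -/
/-- An `ℝ>0`-edge-labelled graph: an irreflexive symmetric adjacency relation on the
vertex set together with a symmetric assignment of a positive real label to each edge. -/
structure ELGraph (V : Type*) where
  Adj : V → V → Prop
  label : V → V → ℝ
  adj_symm : ∀ x y, Adj x y → Adj y x
  adj_irrefl : ∀ x, ¬ Adj x x
  label_symm : ∀ x y, label x y = label y x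
  label_pos : ∀ x y, Adj x y → 0 < label x y


/-- The cyclic successor of an index in `Fin n`. -/
def Fin.cycSucc {n : ℕ} (i : Fin n) : Fin n := ⟨(i.1 + 1) % n, Nat.mod_lt _ i.pos⟩

namespace ELGraph

variable {V : Type*}

/-- A walk: a nonempty list of vertices with consecutive vertices joined by edges. -/
def IsWalk (G : ELGraph V) (l : List V) : Prop :=
  l ≠ [] ∧ l.Chain' G.Adj

/-- The length of a walk: the sum of the labels of its (consecutive) edges. -/
def walkLen (G : ELGraph V) (l : List V) : ℝ :=
  ((l.zip l.tail).map fun p => G.label p.1 p.2).sum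

/-- A walk connecting `x` and `y`. -/
def IsWalkBetween (G : ELGraph V) (x y : V) (l : List V) : Prop :=
  G.IsWalk l ∧ l.head? = some x ∧ l.getLast? = some y

/-- A path connecting `x` and `y`: a walk with no repeated vertices. -/
def IsPathBetween (G : ELGraph V) (x y : V) (l : List V) : Prop :=
  G.IsWalkBetween x y l ∧ l.Nodup

/-- `G` is connected: any two vertices are joined by a path. -/
def Connected (G : ELGraph V) : Prop :=
  ∀ x y, ∃ l, G.IsPathBetween x y l

/-- `d` is the shortest-path distance of `G`: `d x x = 0`, and for distinct `x, y`,
`d x y` is the minimum length of a path connecting `x` and `y`. -/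
def IsShortestDist (G : ELGraph V) (d : V → V → ℝ) : Prop :=
  (∀ x, d x x = 0) ∧
  ∀ x y, x ≠ y →
    (∃ l, G.IsPathBetween x y l ∧ G.walkLen l = d x y) ∧
    ∀ l, G.IsPathBetween x y l → d x y ≤ G.walkLen l

/-- A cycle on `n ≥ 3` vertices, given as an injective map `Fin n → V` with consecutive
vertices (cyclically, including the wrap-around pair) joined by edges. -/
def IsCycle (G : ELGraph V) {n : ℕ} (c : Fin n → V) : Prop :=
  3 ≤ n ∧ Function.Injective c ∧ ∀ i, G.Adj (c i) (c i.cycSucc)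

/-- The total length of the `n` edges of a cycle. -/
noncomputable def cycleLen (G : ELGraph V) {n : ℕ} (c : Fin n → V) : ℝ :=
  ∑ i, G.label (c i) (c i.cycSucc)

/-- The edge of the cycle at position `i₀` is a long edge: its label is strictly greater
than the sum of the labels of all the remaining edges of the cycle. -/
def IsLongEdge (G : ELGraph V) {n : ℕ} (c : Fin n → V) (i₀ : Fin n) : Prop :=
  G.cycleLen c - G.label (c i₀) (c i₀.cycSucc) < G.label (c i₀) (c i₀.cycSucc)

/-- A non-metric cycle: a cycle having a long edge. -/
def IsNonMetricCycle (G : ELGraph V) {n : ℕ} (c : Fin n → V) : Prop :=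
  G.IsCycle c ∧ ∃ i₀, G.IsLongEdge c i₀

/-- An induced cycle: the only edges of `G` among its vertices are the cycle edges. -/
def IsInducedCycle (G : ELGraph V) {n : ℕ} (c : Fin n → V) : Prop :=
  G.IsCycle c ∧ ∀ i j, G.Adj (c i) (c j) → j = i.cycSucc ∨ i = j.cycSucc

/-- An embedding of `A` into `B` as an induced subgraph: an injective map on vertices
such that two vertices are joined by an edge of label `ℓ` iff their images are. -/
def IsEmbedding {W : Type*} (A : ELGraph V) (B : ELGraph W) (e : V → W) : Prop :=
  Function.Injective e ∧
  ∀ x y, (A.Adj x y ↔ B.Adj (e x) (e y)) ∧ (A.Adj x y → B.label (e x) (e y) = A.label x y)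

/-- An automorphism of `B`: a permutation of the vertices preserving edges, non-edges
and labels. -/
def IsAuto {W : Type*} (B : ELGraph W) (Φ : Equiv.Perm W) : Prop :=
  ∀ x y, (B.Adj x y ↔ B.Adj (Φ x) (Φ y)) ∧ (B.Adj x y → B.label (Φ x) (Φ y) = B.label x y)

/-- A partial automorphism of `A` with domain `S`: an injective map preserving edges,
non-edges and labels. -/
def IsPartialAuto (A : ELGraph V) (S : Set V) (φ : S → V) : Prop :=
  Function.Injective φ ∧
  ∀ x y : S, (A.Adj x y ↔ A.Adj (φ x) (φ y)) ∧ (A.Adj x y → A.label (φ x) (φ y) = A.label x y)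

end ELGraph

universe u

/- Auxiliary development for the EPPA theorem (HKN-style XOR construction). -/
namespace EppaAux

open scoped Classical

variable {V : Type u} [Fintype V]

/-- An arbitrary injective rank function on the finite vertex type. -/
noncomputable def rk (V : Type u) [Fintype V] : V → ℕ :=
  (exists_injective_nat V).choose

lemma rk_inj (V : Type u) [Fintype V] : Function.Injective (rk V) :=
  (exists_injective_nat V).choose_spec

variable (A : ELGraph V)

/-- The finite set of labels occurring (as values of the label function). -/
noncomputable def LS : Finset ℝ :=
  Finset.image (fun p : V × V => A.label p.1 p.2) Finset.univ

lemma label_mem_LS (x y : V) : A.label x y ∈ LS A :=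
  Finset.mem_image.2 ⟨(x, y), Finset.mem_univ _, rfl⟩

/-- Label alphabet. -/
abbrev Lam := {r : ℝ // r ∈ LS A}

/-- Vertex set of the extension: a vertex of `A` together with a valuation. -/
abbrev W := V × (V → Lam A → Bool)

noncomputable instance : Fintype (W A) := by
  have : Finite (W A) := by infer_instance
  exact Fintype.ofFinite _

/-- The generic valuation used for the embedding. -/
noncomputable def Eval (a b : V) : Lam A → Bool :=
  fun ℓ => decide (A.Adj a b ∧ rk V a < rk V b ∧ (ℓ : ℝ) = A.label a b)

/-- The canonical difference vector of an edge. -/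
noncomputable def d0 (x y : V) : Lam A → Bool :=
  fun ℓ => decide (A.Adj x y ∧ (ℓ : ℝ) = A.label x y)

/-- The difference vector between two vertices of `W`. -/
def Dvec (u w : W A) : Lam A → Bool := fun ℓ => xor (u.2 w.1 ℓ) (w.2 u.1 ℓ)

lemma Dvec_comm (u w : W A) : Dvec A u w = Dvec A w u :=
  funext fun _ => Bool.xor_comm _ _

lemma d0_eval {x y : V} (h : A.Adj x y) :
    d0 A x y ⟨A.label x y, label_mem_LS A x y⟩ = true := by
  simp [d0, h]

lemma d0_inj {x y x' y' : V} (h' : A.Adj x' y') (he : d0 A x y = d0 A x' y') :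
    A.Adj x y ∧ A.label x y = A.label x' y' := by
  have h1 := congrFun he ⟨A.label x' y', label_mem_LS A x' y'⟩
  rw [d0_eval A h'] at h1
  have h2 := of_decide_eq_true h1
  exact ⟨h2.1, h2.2.symm⟩

lemma Eval_xor (x y : V) :
    (fun ℓ => xor (Eval A x y ℓ) (Eval A y x ℓ)) = d0 A x y := by
  funext ℓ
  by_cases h : A.Adj x y
  · have hxy : x ≠ y := fun e => A.adj_irrefl x (e ▸ h)
    have hyx : A.Adj y x := A.adj_symm _ _ h
    have hlab : A.label y x = A.label x y := A.label_symm y x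
    have hne : rk V x ≠ rk V y := fun e => hxy (rk_inj V e)
    rcases lt_or_gt_of_ne hne with hr | hr
    · have hr' : ¬ rk V y < rk V x := by omega
      simp [Eval, d0, h, hyx, hr, hr', hlab]
    · have hr' : ¬ rk V x < rk V y := by omega
      simp [Eval, d0, h, hyx, hr, hr', hlab]
  · have hyx : ¬ A.Adj y x := fun hh => h (A.adj_symm y x hh)
    simp [Eval, d0, h, hyx]

/-- Adjacency of the extension graph. -/
def BAdj (u w : W A) : Prop :=
  u.1 ≠ w.1 ∧ ∃ x y, A.Adj x y ∧ Dvec A u w = d0 A x y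

/-- Label function of the extension graph. -/
noncomputable def Blab (u w : W A) : ℝ :=
  if h : ∃ x y, A.Adj x y ∧ Dvec A u w = d0 A x y then
    A.label h.choose h.choose_spec.choose
  else 0

lemma Blab_eq {u w : W A} {x y : V} (hadj : A.Adj x y) (hd : Dvec A u w = d0 A x y) :
    Blab A u w = A.label x y := by
  have hex : ∃ x y, A.Adj x y ∧ Dvec A u w = d0 A x y := ⟨x, y, hadj, hd⟩
  unfold Blab
  rw [dif_pos hex]
  obtain ⟨ha0, hd0⟩ := hex.choose_spec.choose_spec
  have he : d0 A hex.choose hex.choose_spec.choose = d0 A x y := by rw [← hd0, ← hd]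
  exact (d0_inj A hadj he).2

lemma Blab_symm (u w : W A) : Blab A u w = Blab A w u := by
  by_cases h : ∃ x y, A.Adj x y ∧ Dvec A u w = d0 A x y
  · obtain ⟨x, y, hadj, hd⟩ := h
    rw [Blab_eq A hadj hd, Blab_eq A hadj (by rw [Dvec_comm A w u]; exact hd)]
  · have h' : ¬ ∃ x y, A.Adj x y ∧ Dvec A w u = d0 A x y := by
      rw [Dvec_comm A w u]; exact h
    unfold Blab
    rw [dif_neg h, dif_neg h']

/-- The extension graph `B`. -/
noncomputable def B : ELGraph (W A) where
  Adj := BAdj A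
  label := Blab A
  adj_symm u w h := ⟨Ne.symm h.1, by rw [Dvec_comm A w u]; exact h.2⟩
  adj_irrefl u h := h.1 rfl
  label_symm := Blab_symm A
  label_pos u w h := by
    obtain ⟨hne, hex⟩ := h
    show (0:ℝ) < Blab A u w
    unfold Blab
    rw [dif_pos hex]
    exact A.label_pos _ _ hex.choose_spec.choose_spec.1

lemma B_adj_iff (u w : W A) :
    (B A).Adj u w ↔ u.1 ≠ w.1 ∧ ∃ x y, A.Adj x y ∧ Dvec A u w = d0 A x y :=
  Iff.rfl

lemma Blabel_eq {u w : W A} {x y : V} (hadj : A.Adj x y) (hd : Dvec A u w = d0 A x y) :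
    (B A).label u w = A.label x y :=
  Blab_eq A hadj hd

/-- The embedding of `A` into `B`. -/
noncomputable def emb : V → W A := fun a => (a, fun b => Eval A a b)

lemma Dvec_emb (x y : V) : Dvec A (emb A x) (emb A y) = d0 A x y :=
  Eval_xor A x y

lemma emb_embedding : A.IsEmbedding (B A) (emb A) := by
  refine ⟨fun a b h => congrArg Prod.fst h, fun x y => ⟨⟨?_, ?_⟩, ?_⟩⟩
  · intro h
    refine ⟨fun e => A.adj_irrefl x ?_, x, y, h, Dvec_emb A x y⟩
    · have : x = y := e
      rw [this] at h ⊢; exact h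
  · rintro ⟨hne, x', y', h', hd⟩
    have he : d0 A x y = d0 A x' y' := by rw [← Dvec_emb A x y, hd]
    exact (d0_inj A h' he).1
  · intro h
    exact Blabel_eq A h (Dvec_emb A x y)

lemma bool_xor_cancel : ∀ a c : Bool, xor a (xor a c) = c := by decide

lemma bool_xor4 : ∀ a b c : Bool, xor (xor a c) (xor b c) = xor a b := by decide

lemma bool_xor_aux : ∀ x y z w p : Bool, xor x y = p → xor z w = p → xor x z = xor y w := by
  decide

section Ext

variable (S : Set V) (π : Equiv.Perm V)

/-- The correction ("switching") vectors. -/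
noncomputable def vc (a b : V) : Lam A → Bool :=
  if a ∈ S then fun ℓ => xor (Eval A a b ℓ) (Eval A (π a) (π b) ℓ)
  else if b ∈ S then fun ℓ => xor (Eval A b a ℓ) (Eval A (π b) (π a) ℓ)
  else fun _ => false

lemma vc_symm (hd0 : ∀ a b, a ∈ S → b ∈ S → d0 A a b = d0 A (π a) (π b)) (a b : V) :
    vc A S π a b = vc A S π b a := by
  unfold vc
  by_cases ha : a ∈ S
  · by_cases hb : b ∈ S
    · simp only [if_pos ha, if_pos hb]
      funext ℓ
      have h1 := congrFun (Eval_xor A a b) ℓ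
      have h2 := congrFun (Eval_xor A (π a) (π b)) ℓ
      rw [← hd0 a b ha hb] at h2
      exact bool_xor_aux _ _ _ _ _ h1 h2
    · simp only [if_pos ha, if_neg hb]
  · by_cases hb : b ∈ S
    · simp only [if_neg ha, if_pos hb]
    · simp only [if_neg ha, if_neg hb]

/-- The lifted permutation of `W`. -/
noncomputable def Phi : Equiv.Perm (W A) where
  toFun u := (π u.1, fun b ℓ => xor (u.2 (π.symm b) ℓ) (vc A S π u.1 (π.symm b) ℓ))
  invFun u := (π.symm u.1, fun b ℓ => xor (u.2 (π b) ℓ) (vc A S π (π.symm u.1) b ℓ))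
  left_inv := by
    rintro ⟨a, χ⟩
    simp only [Equiv.symm_apply_apply, Prod.mk.injEq, eq_self_iff_true, true_and]
    funext b ℓ
    rw [Bool.xor_assoc, Bool.xor_self, Bool.xor_false]
  right_inv := by
    rintro ⟨a, χ⟩
    simp only [Equiv.apply_symm_apply, Prod.mk.injEq, eq_self_iff_true, true_and]
    funext b ℓ
    rw [Bool.xor_assoc, Bool.xor_self, Bool.xor_false]

lemma Dvec_Phi (hd0 : ∀ a b, a ∈ S → b ∈ S → d0 A a b = d0 A (π a) (π b)) (u w : W A) :
    Dvec A (Phi A S π u) (Phi A S π w) = Dvec A u w := by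
  funext ℓ
  show xor (xor (u.2 (π.symm (π w.1)) ℓ) (vc A S π u.1 (π.symm (π w.1)) ℓ))
      (xor (w.2 (π.symm (π u.1)) ℓ) (vc A S π w.1 (π.symm (π u.1)) ℓ))
    = xor (u.2 w.1 ℓ) (w.2 u.1 ℓ)
  rw [π.symm_apply_apply, π.symm_apply_apply, vc_symm A S π hd0 w.1 u.1]
  exact bool_xor4 _ _ _

lemma Phi_auto (hd0 : ∀ a b, a ∈ S → b ∈ S → d0 A a b = d0 A (π a) (π b)) :
    (B A).IsAuto (Phi A S π) := by
  intro u w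
  have hD := Dvec_Phi A S π hd0 u w
  constructor
  · rw [B_adj_iff, B_adj_iff, hD]
    exact and_congr ⟨fun h e => h (π.injective e), fun h e => h (congrArg π e)⟩ Iff.rfl
  · intro hadj
    obtain ⟨hne, x, y, hxy, hd⟩ := (B_adj_iff A u w).1 hadj
    rw [Blabel_eq A hxy (by rw [hD]; exact hd), Blabel_eq A hxy hd]

lemma Phi_emb {x : V} (hx : x ∈ S) : Phi A S π (emb A x) = emb A (π x) := by
  unfold Phi emb
  simp only [Equiv.coe_fn_mk, Prod.mk.injEq, eq_self_iff_true, true_and]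
  funext b ℓ
  unfold vc
  simp only [if_pos hx, Equiv.apply_symm_apply]
  exact bool_xor_cancel _ _

end Ext

end EppaAux


/-- For every finite `ℝ>0`-edge-labelled graph `A` there exists a finite
`ℝ>0`-edge-labelled graph `B` containing `A` as an induced subgraph such that every
partial automorphism of `A` extends to an automorphism of `B`. -/
theorem eppa_for_edge_labelled_graphs {V : Type u} [Fintype V] (A : ELGraph V) :
    ∃ (W : Type u) (_ : Fintype W) (B : ELGraph W) (e : V → W),
      A.IsEmbedding B e ∧
      ∀ (S : Set V) (φ : S → V), A.IsPartialAuto S φ →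
        ∃ Φ : Equiv.Perm W, B.IsAuto Φ ∧ ∀ x : S, Φ (e x) = e (φ x) := by
  classical
  refine ⟨EppaAux.W A, inferInstance, EppaAux.B A, EppaAux.emb A,
    EppaAux.emb_embedding A, ?_⟩
  intro S φ hφ
  obtain ⟨hinj, hpres⟩ := hφ
  let e0 : {x // x ∈ S} ≃ {x // x ∈ Set.range φ} := Equiv.ofInjective φ hinj
  let π : Equiv.Perm V := e0.extendSubtype
  have hπ : ∀ x : S, π ↑x = φ x := by
    intro x
    show e0.extendSubtype ↑x = φ x
    have h1 := Equiv.extendSubtype_apply_of_mem e0 ↑x x.2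
    exact h1
  have hd0 : ∀ a b, a ∈ S → b ∈ S → EppaAux.d0 A a b = EppaAux.d0 A (π a) (π b) := by
    intro a b ha hb
    have hπa : π a = φ ⟨a, ha⟩ := hπ ⟨a, ha⟩
    have hπb : π b = φ ⟨b, hb⟩ := hπ ⟨b, hb⟩
    obtain ⟨hiff, hlab⟩ := hpres ⟨a, ha⟩ ⟨b, hb⟩
    have hiff' : A.Adj a b ↔ A.Adj (φ ⟨a, ha⟩) (φ ⟨b, hb⟩) := hiff
    have hlab' : A.Adj a b → A.label (φ ⟨a, ha⟩) (φ ⟨b, hb⟩) = A.label a b := hlab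
    funext ℓ
    rw [hπa, hπb]
    unfold EppaAux.d0
    by_cases hab : A.Adj a b
    · simp [hab, hiff'.mp hab, hlab' hab]
    · have h2 : ¬ A.Adj (φ ⟨a, ha⟩) (φ ⟨b, hb⟩) := fun hh => hab (hiff'.mpr hh)
      simp [hab, h2]
  refine ⟨EppaAux.Phi A S π, EppaAux.Phi_auto A S π hd0, ?_⟩
  intro x
  show EppaAux.Phi A S π (EppaAux.emb A ↑x) = EppaAux.emb A (φ x)
  rw [EppaAux.Phi_emb A S π x.2, hπ x]
end

section
/- Let G be a finite connected ℝ>0-edge-labelled graph and let d̄(x,y) denote the minimum length of a path connecting distinct vertices x and y in G. Then the label of every edge {x,y} of G equals d̄(x,y) (i.e., G is a subgraph of its shortest path completion) if and only if G contains no induced non-metric cycle. -/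
/-!
A path `P` from `x` to `y` that is shorter than the edge `xy` (a shortcut) closes up with that
edge to a non-metric cycle, and every non-metric cycle arises in this way from its long edge.
So an edge labelled by its distance has no shortcut, while for an edge whose label exceeds the
distance a shortest path is a shortcut. A shortcut with as few vertices as possible spans an
induced cycle: a chord `uv` cutting off a subpath `Q` of `P` is either at most as long as `Q`,
and then replacing `Q` by `uv` gives a smaller shortcut for `xy`, or longer than `Q`, and then
`Q` is a smaller shortcut for `uv`.
-/

namespace Fin

lemma cycSucc_eq_add_one {p : ℕ} (i : Fin (p + 1)) : i.cycSucc = i + 1 := by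
  ext
  simp [cycSucc, val_add]

lemma val_cycSucc_of_lt {n : ℕ} {i : Fin n} (h : i.val + 1 < n) : i.cycSucc.val = i.val + 1 :=
  Nat.mod_eq_of_lt h

lemma val_cycSucc_of_eq {n : ℕ} {i : Fin n} (h : i.val + 1 = n) : i.cycSucc.val = 0 := by
  simp [cycSucc, h]

end Fin

namespace List

variable {α : Type*}

lemma exists_eq_append_getElem_cons_append_getElem_cons (l : List α) {i j : ℕ} (hij : i < j)
    (hj : j < l.length) :
    ∃ L M R, l = L ++ l[i] :: (M ++ l[j] :: R) ∧ L.length = i ∧ L.length + M.length + 1 = j := by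
  refine ⟨l.take i, (l.drop (i + 1)).take (j - i - 1), l.drop (j + 1), ?_,
    by simp only [length_take]; omega, by simp only [length_take, length_drop]; omega⟩
  conv_lhs => rw [← take_append_drop i l, drop_eq_getElem_cons (by omega),
    ← take_append_drop (j - i - 1) (l.drop (i + 1)), drop_drop,
    show i + 1 + (j - i - 1) = j by omega, drop_eq_getElem_cons hj]

end List

namespace ELGraph

variable {V : Type*} {G : ELGraph V}

lemma walkLen_singleton (x : V) : G.walkLen [x] = 0 := by
  simp [walkLen]

lemma walkLen_cons_cons (x y : V) (l : List V) :
    G.walkLen (x :: y :: l) = G.label x y + G.walkLen (y :: l) := by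
  simp [walkLen]

lemma walkLen_pair (x y : V) : G.walkLen [x, y] = G.label x y := by
  rw [walkLen_cons_cons, walkLen_singleton, add_zero]

lemma walkLen_append_cons (l₁ l₂ : List V) (a : V) :
    G.walkLen (l₁ ++ a :: l₂) = G.walkLen (l₁ ++ [a]) + G.walkLen (a :: l₂) := by
  induction l₁ with
  | nil => simp [walkLen_singleton]
  | cons b l₁ ih =>
    cases l₁ with
    | nil => simp [walkLen_cons_cons, walkLen_singleton]
    | cons c l₁ =>
      simp only [List.cons_append, walkLen_cons_cons] at ih ⊢
      rw [ih, add_assoc]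

lemma walkLen_ofFn {p : ℕ} (f : Fin (p + 1) → V) :
    G.walkLen (List.ofFn f) = ∑ i : Fin p, G.label (f i.castSucc) (f i.succ) := by
  induction p with
  | zero => simp [walkLen_singleton]
  | succ p ih =>
    have ih' := ih fun i => f i.succ
    rw [List.ofFn_succ] at ih'
    rw [List.ofFn_succ, List.ofFn_succ, walkLen_cons_cons, ih', Fin.sum_univ_succ]
    rfl

lemma cycleLen_eq_walkLen_ofFn {n : ℕ} (hn : 0 < n) (c : Fin n → V) :
    G.cycleLen c = G.walkLen (List.ofFn c) + G.label (c ⟨n - 1, by omega⟩) (c ⟨0, hn⟩) := by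
  obtain ⟨p, rfl⟩ : ∃ p, n = p + 1 := ⟨n - 1, by omega⟩
  rw [cycleLen, Fin.sum_univ_castSucc, walkLen_ofFn]
  simp only [Fin.cycSucc_eq_add_one, Fin.coeSucc_eq_succ, Fin.last_add_one]
  rfl

lemma cycleLen_comp_add_left {p : ℕ} (c : Fin (p + 1) → V) (r : Fin (p + 1)) :
    G.cycleLen (fun k => c (r + k)) = G.cycleLen c := by
  simp only [cycleLen, Fin.cycSucc_eq_add_one, ← add_assoc]
  exact Equiv.sum_comp (Equiv.addLeft r) fun i => G.label (c i) (c (i + 1))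

lemma ne_of_adj {x y : V} (h : G.Adj x y) : x ≠ y :=
  fun e => G.adj_irrefl x (e ▸ h)

lemma IsWalkBetween.getElem_zero {x y : V} {P : List V} (h : G.IsWalkBetween x y P)
    (hP : 0 < P.length) : P[0] = x := by
  simpa [List.head?_eq_getElem?, List.getElem?_eq_getElem hP] using h.2.1

lemma IsWalkBetween.getElem_length_sub_one {x y : V} {P : List V} (h : G.IsWalkBetween x y P)
    (hP : 0 < P.length) : P[P.length - 1] = y := by
  simpa [List.getLast?_eq_getElem?, List.getElem?_eq_getElem (by omega : P.length - 1 < P.length)]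
    using h.2.2

lemma isPathBetween_pair {x y : V} (hxy : G.Adj x y) : G.IsPathBetween x y [x, y] :=
  ⟨⟨⟨by simp, List.isChain_pair.mpr hxy⟩, rfl, rfl⟩, by simpa using ne_of_adj hxy⟩

lemma isPathBetween_ofFn {p : ℕ} {f : Fin (p + 1) → V} (hf : Function.Injective f)
    (hadj : ∀ i : Fin p, G.Adj (f i.castSucc) (f i.succ)) :
    G.IsPathBetween (f 0) (f (Fin.last p)) (List.ofFn f) := by
  refine ⟨⟨⟨by simp, List.isChain_ofFn.mpr fun i hi => hadj ⟨i, by omega⟩⟩, ?_, ?_⟩,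
    List.nodup_ofFn.mpr hf⟩
  · simp
  · rw [List.getLast?_eq_getElem?, List.length_ofFn, List.getElem?_ofFn]
    simp [Fin.last]

def IsShortcut (G : ELGraph V) (x y : V) (P : List V) : Prop :=
  G.Adj x y ∧ G.IsPathBetween x y P ∧ G.walkLen P < G.label x y

namespace IsShortcut

variable {x y : V} {P : List V}

lemma three_le_length (h : G.IsShortcut x y P) : 3 ≤ P.length := by
  obtain ⟨hxy, ⟨⟨⟨hne, -⟩, hx, hy⟩, -⟩, hlt⟩ := h
  rcases P with _ | ⟨a, _ | ⟨b, _ | ⟨c, P⟩⟩⟩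
  · exact absurd rfl hne
  · simp only [List.head?_cons, List.getLast?_singleton, Option.some.injEq] at hx hy
    exact absurd (hx.symm.trans hy) (ne_of_adj hxy)
  · simp only [List.head?_cons, List.getLast?_cons_cons, List.getLast?_singleton,
      Option.some.injEq] at hx hy
    subst hx hy
    exact absurd (walkLen_pair a b ▸ hlt) (lt_irrefl _)
  · simp

lemma isNonMetricCycle_get (h : G.IsShortcut x y P) : G.IsNonMetricCycle P.get := by
  have h3 := h.three_le_length
  have hx : P[0] = x := h.2.1.1.getElem_zero (by omega)
  have hy : P[P.length - 1] = y := h.2.1.1.getElem_length_sub_one (by omega)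
  have hlast : P.length - 1 < P.length := by omega
  have hzero : (⟨P.length - 1, hlast⟩ : Fin P.length).cycSucc = ⟨0, by omega⟩ :=
    Fin.ext (Fin.val_cycSucc_of_eq (by simp only; omega))
  refine ⟨⟨h3, List.nodup_iff_injective_get.mp h.2.1.2, fun i => ?_⟩, ⟨P.length - 1, hlast⟩, ?_⟩
  · by_cases hi : i.val + 1 = P.length
    · obtain rfl : i = ⟨P.length - 1, hlast⟩ := Fin.ext (by simp only; omega)
      simpa [hzero, hx, hy] using G.adj_symm _ _ h.1
    · have hsucc : i.cycSucc = ⟨i.val + 1, by omega⟩ := Fin.ext (Fin.val_cycSucc_of_lt (by omega))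
      simpa [hsucc] using h.2.1.1.1.2.getElem i (by omega)
  · have hlen := cycleLen_eq_walkLen_ofFn (G := G) (by omega) P.get
    rw [List.ofFn_get] at hlen
    simp only [IsLongEdge, hzero, hlen, List.get_eq_getElem, hx, hy, G.label_symm y x]
    linarith [h.2.2]

lemma exists_shorter_of_chord {L M R : List V} {u v : V} (h : G.IsShortcut x y P)
    (hP : P = L ++ u :: (M ++ v :: R)) (huv : G.Adj u v) (hM : M ≠ []) (hLR : L ≠ [] ∨ R ≠ []) :
    ∃ x' y' P', G.IsShortcut x' y' P' ∧ P'.length < P.length := by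
  subst hP
  obtain ⟨hxy, ⟨⟨⟨-, hchain⟩, hx, hy⟩, hnodup⟩, hlt⟩ := h
  change List.IsChain _ _ at hchain
  obtain ⟨hchainL, hchainQR⟩ := List.isChain_split.mp hchain
  rw [← List.cons_append] at hchainQR
  obtain ⟨hchainQ, hchainR⟩ := List.isChain_split.mp hchainQR
  have hlenP : G.walkLen (L ++ u :: (M ++ v :: R)) =
      G.walkLen (L ++ [u]) + G.walkLen (u :: M ++ [v]) + G.walkLen (v :: R) := by
    rw [walkLen_append_cons, ← List.cons_append, walkLen_append_cons (u :: M) R v, add_assoc]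
  by_cases hle : G.label u v ≤ G.walkLen (u :: M ++ [v])
  · have hlen : G.walkLen (L ++ u :: v :: R) =
        G.walkLen (L ++ [u]) + G.label u v + G.walkLen (v :: R) := by
      rw [walkLen_append_cons, walkLen_cons_cons, add_assoc]
    refine ⟨x, y, L ++ u :: v :: R, ⟨hxy, ⟨⟨⟨by simp, ?_⟩, ?_, ?_⟩, ?_⟩, by linarith⟩, ?_⟩
    · exact List.isChain_split.mpr ⟨hchainL, List.isChain_cons_cons.mpr ⟨huv, hchainR⟩⟩
    · rw [← hx]
      simp [List.head?_append]
    · rw [← hy]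
      simp only [List.getLast?_append, List.getLast?_cons, Option.getD_some, Option.some_or]
    · refine hnodup.sublist ((List.Sublist.cons_cons u ?_).append_left L)
      exact List.sublist_append_right M (v :: R)
    · simp [List.length_pos_iff.mpr hM]
  · refine ⟨u, v, u :: M ++ [v], ⟨huv, ⟨⟨⟨by simp, hchainQ⟩, by simp, List.getLast?_concat⟩, ?_⟩,
      by linarith⟩, ?_⟩
    · refine hnodup.sublist ((List.Sublist.cons_cons u ?_).trans (List.sublist_append_right L _))
      exact List.Sublist.append_left (by simp) M
    · rcases hLR with hL | hR
      · have := List.length_pos_iff.mpr hL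
        simp only [List.length_append, List.length_cons, List.length_nil]
        omega
      · have := List.length_pos_iff.mpr hR
        simp only [List.length_append, List.length_cons, List.length_nil]
        omega

lemma isInducedCycle_get_or_exists_shorter (h : G.IsShortcut x y P) :
    G.IsInducedCycle P.get ∨ ∃ x' y' P', G.IsShortcut x' y' P' ∧ P'.length < P.length := by
  refine or_iff_not_imp_right.mpr fun hmin => ⟨h.isNonMetricCycle_get.1, fun i j hij => ?_⟩
  wlog hle : i ≤ j generalizing i j
  · exact (this j i (G.adj_symm _ _ hij) (le_of_not_ge hle)).symm
  obtain hlt | rfl := hle.lt_or_eq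
  swap
  · exact absurd hij (G.adj_irrefl _)
  by_contra hne
  push Not at hne
  obtain ⟨L, M, R, hP, hL, hM⟩ :=
    P.exists_eq_append_getElem_cons_append_getElem_cons (Fin.lt_def.mp hlt) j.isLt
  refine hmin (h.exists_shorter_of_chord hP hij ?_ ?_)
  · rintro rfl
    simp only [List.length_nil] at hM
    exact hne.1 (Fin.ext (by rw [Fin.val_cycSucc_of_lt (by omega)]; omega))
  · by_contra! hLR
    obtain ⟨rfl, rfl⟩ := hLR
    have hlen := congrArg List.length hP
    simp only [List.length_append, List.length_cons, List.length_nil] at hlen hL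
    exact hne.2 (Fin.ext (by rw [Fin.val_cycSucc_of_eq (by omega)]; omega))

lemma exists_induced_nonMetricCycle (h : G.IsShortcut x y P) :
    ∃ (n : ℕ) (c : Fin n → V), G.IsInducedCycle c ∧ G.IsNonMetricCycle c := by
  induction hn : P.length using Nat.strong_induction_on generalizing x y P with
  | _ n ih =>
    obtain hind | ⟨x', y', P', hP', hlt⟩ := h.isInducedCycle_get_or_exists_shorter
    · exact ⟨_, _, hind, h.isNonMetricCycle_get⟩
    · exact ih _ (hn ▸ hlt) hP' rfl

end IsShortcut

lemma IsNonMetricCycle.exists_isShortcut {n : ℕ} {c : Fin n → V} (hc : G.IsNonMetricCycle c) :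
    ∃ x y P, G.IsShortcut x y P := by
  obtain ⟨⟨hn, hinj, hadj⟩, i₀, hlong⟩ := hc
  obtain ⟨p, rfl⟩ : ∃ p, n = p + 1 := ⟨n - 1, by omega⟩
  simp only [Fin.cycSucc_eq_add_one] at hadj
  have hlast : i₀ + 1 + Fin.last p = i₀ := by
    rw [add_assoc, add_comm 1, Fin.last_add_one, add_zero]
  have hpath : G.IsPathBetween (c (i₀ + 1)) (c i₀) (List.ofFn fun k => c (i₀ + 1 + k)) := by
    simpa [hlast] using isPathBetween_ofFn (hinj.comp (add_right_injective (i₀ + 1)))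
      fun i => by simpa [← Fin.coeSucc_eq_succ, add_assoc] using hadj (i₀ + 1 + i.castSucc)
  have hlen : G.cycleLen c =
      G.walkLen (List.ofFn fun k => c (i₀ + 1 + k)) + G.label (c i₀) (c (i₀ + 1)) := by
    rw [← cycleLen_comp_add_left c (i₀ + 1), cycleLen_eq_walkLen_ofFn (Nat.succ_pos p)]
    simp only [Fin.zero_eta, add_zero]
    exact congrArg (fun v => _ + G.label (c v) (c (i₀ + 1))) hlast
  refine ⟨_, _, _, G.adj_symm _ _ (hadj i₀), hpath, ?_⟩
  simp only [IsLongEdge, Fin.cycSucc_eq_add_one] at hlong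
  rw [G.label_symm]
  linarith

namespace IsShortestDist

variable {d : V → V → ℝ} {x y : V}

lemma dist_lt_label (hd : G.IsShortestDist d) {P : List V} (h : G.IsShortcut x y P) :
    d x y < G.label x y :=
  ((hd.2 x y (ne_of_adj h.1)).2 P h.2.1).trans_lt h.2.2

lemma exists_isShortcut (hd : G.IsShortestDist d) (hxy : G.Adj x y) (hne : G.label x y ≠ d x y) :
    ∃ P, G.IsShortcut x y P := by
  obtain ⟨⟨P, hP, hlen⟩, hmin⟩ := hd.2 x y (ne_of_adj hxy)
  have hle : d x y ≤ G.label x y := walkLen_pair (G := G) x y ▸ hmin _ (isPathBetween_pair hxy)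
  exact ⟨P, hxy, hP, hlen ▸ hle.lt_of_ne hne.symm⟩

end IsShortestDist

end ELGraph

theorem subgraph_of_completion_iff_no_induced_nonmetric_cycle_general {V : Type*}
    (G : ELGraph V) (d : V → V → ℝ) (hd : G.IsShortestDist d) :
    (∀ x y, G.Adj x y → G.label x y = d x y) ↔
      ¬ ∃ (n : ℕ) (c : Fin n → V), G.IsInducedCycle c ∧ G.IsNonMetricCycle c := by
  constructor
  · rintro h ⟨n, c, -, hc⟩
    obtain ⟨x, y, P, hP⟩ := hc.exists_isShortcut
    exact (hd.dist_lt_label hP).ne' (h x y hP.1)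
  · intro hno x y hxy
    by_contra hne
    obtain ⟨P, hP⟩ := hd.exists_isShortcut hxy hne
    exact hno hP.exists_induced_nonMetricCycle

/-- Let `G` be a finite connected `ℝ>0`-edge-labelled graph and `d` its shortest-path
distance. Then every edge of `G` has label equal to the shortest-path distance between
its endpoints (i.e. `G` is a subgraph of its shortest path completion) if and only if
`G` contains no induced non-metric cycle. -/
theorem subgraph_of_completion_iff_no_induced_nonmetric_cycle {V : Type*} [Fintype V]
    (G : ELGraph V) (hG : G.Connected) (d : V → V → ℝ) (hd : G.IsShortestDist d) :
    (∀ x y, G.Adj x y → G.label x y = d x y) ↔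
      ¬ ∃ (n : ℕ) (c : Fin n → V), G.IsInducedCycle c ∧ G.IsNonMetricCycle c :=
  subgraph_of_completion_iff_no_induced_nonmetric_cycle_general G d hd
end

section
/- Let x_1, ..., x_n (n ≥ 3) be a non-metric cycle in an ℝ>0-edge-labelled graph G with long edge {x_1, x_n}, and suppose G contains a chord, i.e., an edge {x_i, x_j} between two vertices of the cycle not joined by an edge of the cycle. Then at least one of the two cycles into which the chord splits the original cycle is non-metric. -/
open Finset

theorem Function.Periodic.sum_range_add {M : Type*} [AddCancelCommMonoid M] {w : ℕ → M}
    {n : ℕ} (hw : Function.Periodic w n) (s : ℕ) :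
    ∑ t ∈ range n, w (s + t) = ∑ t ∈ range n, w t := by
  induction s with
  | zero => simp
  | succ s ih =>
    have hrot := (sum_range_succ' (fun t => w (s + t)) n).symm.trans
      (sum_range_succ (fun t => w (s + t)) n)
    rw [add_zero, hw s, add_left_inj] at hrot
    rw [← ih, ← hrot]
    exact sum_congr rfl fun t _ => by rw [add_right_comm, add_assoc]

theorem Fin.cycSucc_ofNat (n : ℕ) [NeZero n] (t : ℕ) :
    (Fin.ofNat n t).cycSucc = Fin.ofNat n (t + 1) :=
  Fin.ext (by simp [Fin.cycSucc, Nat.add_mod])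

theorem Fin.cycSucc_castSucc {m : ℕ} (k : Fin m) : k.castSucc.cycSucc = k.succ :=
  Fin.ext (Nat.mod_eq_of_lt (by simp))

theorem Fin.cycSucc_last (m : ℕ) : (Fin.last m).cycSucc = 0 :=
  Fin.ext (Nat.mod_self _)

namespace ELGraph

variable {V : Type*} (G : ELGraph V) {n : ℕ} [NeZero n] (c : Fin n → V)

def edgeLabel (t : ℕ) : ℝ :=
  G.label (c (Fin.ofNat n t)) (c (Fin.ofNat n (t + 1)))

theorem edgeLabel_periodic : Function.Periodic (G.edgeLabel c) n := fun t => by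
  have hwrap (u : ℕ) : Fin.ofNat n (u + n) = Fin.ofNat n u := Fin.ext (by simp)
  simp only [edgeLabel, add_right_comm t n 1, hwrap]

theorem label_cycSucc (i : Fin n) : G.label (c i) (c i.cycSucc) = G.edgeLabel c i := by
  rw [edgeLabel, ← Fin.cycSucc_ofNat, Fin.ofNat_val_eq_self]

theorem cycleLen_eq_sum_range : G.cycleLen c = ∑ t ∈ range n, G.edgeLabel c t := by
  simp only [cycleLen, label_cycSucc, Fin.sum_univ_eq_sum_range (G.edgeLabel c)]

/-- The vertices `c s, c (s + 1), …, c (s + m)`, indices read mod `n`; as a cycle it is closed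
by an edge from `c (s + m)` back to `c s`. -/
def cycleArc (s m : ℕ) : Fin (m + 1) → V :=
  fun k => c (Fin.ofNat n (s + k))

theorem label_cycleArc_castSucc (s : ℕ) {m : ℕ} (k : Fin m) :
    G.label (cycleArc c s m k.castSucc) (cycleArc c s m k.castSucc.cycSucc) =
      G.edgeLabel c (s + k) := by
  simp [cycleArc, Fin.cycSucc_castSucc, edgeLabel, add_assoc]

theorem label_cycleArc_last (s m : ℕ) :
    G.label (cycleArc c s m (Fin.last m)) (cycleArc c s m (Fin.last m).cycSucc) =
      G.label (c (Fin.ofNat n (s + m))) (c (Fin.ofNat n s)) := by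
  simp [cycleArc, Fin.cycSucc_last]

theorem cycleLen_cycleArc (s m : ℕ) :
    G.cycleLen (cycleArc c s m) = ∑ k ∈ range m, G.edgeLabel c (s + k) +
      G.label (c (Fin.ofNat n (s + m))) (c (Fin.ofNat n s)) := by
  rw [cycleLen, Fin.sum_univ_castSucc, label_cycleArc_last]
  simp only [label_cycleArc_castSucc, Fin.sum_univ_eq_sum_range (fun k => G.edgeLabel c (s + k))]

theorem injective_cycleArc (hc : Function.Injective c) (s : ℕ) {m : ℕ} (hmn : m < n) :
    Function.Injective (cycleArc c s m) := by
  intro k l hkl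
  have hmod : (s + k) % n = (s + l) % n := by simpa using congrArg Fin.val (hc hkl)
  exact Fin.ext (Nat.ModEq.eq_of_lt_of_lt (Nat.ModEq.add_left_cancel' s hmod) (by omega)
    (by omega))

theorem isCycle_cycleArc (hc : G.IsCycle c) (s : ℕ) {m : ℕ} (hm : 2 ≤ m) (hmn : m < n)
    (hchord : G.Adj (c (Fin.ofNat n (s + m))) (c (Fin.ofNat n s))) :
    G.IsCycle (cycleArc c s m) := by
  refine ⟨by omega, injective_cycleArc c hc.2.1 s hmn, fun k => ?_⟩
  cases k using Fin.lastCases with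
  | last => simpa [cycleArc, Fin.cycSucc_last] using hchord
  | cast k =>
    have hedge := hc.2.2 (Fin.ofNat n (s + k))
    rw [Fin.cycSucc_ofNat] at hedge
    simpa [cycleArc, Fin.cycSucc_castSucc, add_assoc] using hedge

theorem isLongEdge_cycleArc_last (s m : ℕ)
    (hshort : ∑ k ∈ range m, G.edgeLabel c (s + k) <
      G.label (c (Fin.ofNat n (s + m))) (c (Fin.ofNat n s))) :
    G.IsLongEdge (cycleArc c s m) (Fin.last m) := by
  rw [IsLongEdge, label_cycleArc_last, cycleLen_cycleArc]
  linarith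

theorem cycleLen_eq_sum_arc_add_sum_arc (s : ℕ) {m : ℕ} (hmn : m ≤ n) :
    G.cycleLen c = ∑ t ∈ range m, G.edgeLabel c (s + t) +
      ∑ t ∈ range (n - m), G.edgeLabel c (s + m + t) := by
  have hsplit := sum_range_add (fun t => G.edgeLabel c (s + t)) m (n - m)
  rw [Nat.add_sub_cancel' hmn] at hsplit
  rw [cycleLen_eq_sum_range, ← (edgeLabel_periodic G c).sum_range_add s, hsplit]
  simp only [add_assoc]

/-- The chord replaces the complementary arc and is no longer than it, so the new cycle is no
longer than `c` while keeping the long edge of `c`. -/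
theorem isLongEdge_cycleArc_castSucc (s : ℕ) {m : ℕ} (hmn : m ≤ n) (k : Fin m)
    (hlong : G.IsLongEdge c (Fin.ofNat n (s + k)))
    (hchord : G.label (c (Fin.ofNat n (s + m))) (c (Fin.ofNat n s)) ≤
      ∑ t ∈ range (n - m), G.edgeLabel c (s + m + t)) :
    G.IsLongEdge (cycleArc c s m) k.castSucc := by
  rw [IsLongEdge, Fin.cycSucc_ofNat] at hlong
  change G.cycleLen c - G.edgeLabel c (s + k) < G.edgeLabel c (s + k) at hlong
  rw [IsLongEdge, label_cycleArc_castSucc, cycleLen_cycleArc]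
  linarith [G.cycleLen_eq_sum_arc_add_sum_arc c s hmn]

theorem isNonMetricCycle_cycleArc_or (hc : G.IsCycle c) (s : ℕ) {m : ℕ} (hm : 2 ≤ m)
    (hmn : m + 2 ≤ n) (hchord : G.Adj (c (Fin.ofNat n s)) (c (Fin.ofNat n (s + m))))
    {k : ℕ} (hk : k < n - m) (hlong : G.IsLongEdge c (Fin.ofNat n (s + m + k))) :
    G.IsNonMetricCycle (cycleArc c s m) ∨
      G.IsNonMetricCycle (cycleArc c (s + m) (n - m)) := by
  have hwrap : Fin.ofNat n (s + m + (n - m)) = Fin.ofNat n s := by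
    rw [add_assoc, Nat.add_sub_cancel' (by omega)]
    exact Fin.ext (by simp)
  rcases lt_or_ge (∑ t ∈ range m, G.edgeLabel c (s + t))
      (G.label (c (Fin.ofNat n s)) (c (Fin.ofNat n (s + m)))) with hshort | hlong_chord
  · refine .inl ⟨G.isCycle_cycleArc c hc s hm (by omega) (G.adj_symm _ _ hchord), _,
      G.isLongEdge_cycleArc_last c s m ?_⟩
    rwa [G.label_symm]
  · refine .inr ⟨G.isCycle_cycleArc c hc (s + m) (by omega) (by omega) (hwrap ▸ hchord),
      _, G.isLongEdge_cycleArc_castSucc c (s + m) (by omega) ⟨k, hk⟩ hlong ?_⟩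
    rw [hwrap, Nat.sub_sub_self (by omega)]
    refine hlong_chord.trans_eq (sum_congr rfl fun t _ => ?_)
    rw [show s + m + (n - m) + t = s + t + n by omega, edgeLabel_periodic]

end ELGraph

/-- Let `c : Fin n → V` (`n ≥ 3`) be a non-metric cycle in an `ℝ>0`-edge-labelled graph
`G` whose long edge is the wrap-around edge `{x₁, xₙ}` (the edge from index `n - 1` to
index `0`), and suppose `G` contains a chord, i.e. an edge `{c i, c j}` between two
vertices of the cycle not joined by a cycle edge. Then at least one of the two cycles
into which the chord splits the original cycle (the arc from `i` to `j` closed by the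
chord, and the arc from `j` around through `xₙ, x₁` to `i` closed by the chord) is
non-metric. -/
theorem chord_splits_nonmetric_cycle {V : Type*} (G : ELGraph V)
    {n : ℕ} (hn : 3 ≤ n) (c : Fin n → V) (hcyc : G.IsCycle c)
    (hlong : G.IsLongEdge c ⟨n - 1, by omega⟩)
    (i j : Fin n) (hij : (i : ℕ) < (j : ℕ))
    (hchord : G.Adj (c i) (c j))
    (hnot₁ : j ≠ i.cycSucc) (hnot₂ : i ≠ j.cycSucc) :
    G.IsNonMetricCycle
        (fun k : Fin ((j : ℕ) - (i : ℕ) + 1) =>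
          c ⟨(i : ℕ) + (k : ℕ), by have := k.isLt; have := j.isLt; omega⟩) ∨
      G.IsNonMetricCycle
        (fun k : Fin (n - ((j : ℕ) - (i : ℕ)) + 1) =>
          c ⟨((j : ℕ) + (k : ℕ)) % n, Nat.mod_lt _ (by omega)⟩) := by
  have : NeZero n := ⟨by omega⟩
  have hgap_inner : 2 ≤ (j : ℕ) - i := by
    have hsucc : (i.cycSucc : ℕ) = i + 1 := Nat.mod_eq_of_lt (by omega)
    by_contra h
    exact hnot₁ (Fin.ext (by omega))
  have hgap_outer : (j : ℕ) - i + 2 ≤ n := by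
    by_contra h
    have hsucc : (j.cycSucc : ℕ) = 0 := by
      show ((j : ℕ) + 1) % n = 0
      rw [show (j : ℕ) + 1 = n by omega, Nat.mod_self]
    exact hnot₂ (Fin.ext (by omega))
  have hj : (i : ℕ) + (j - i) = j := by omega
  have hsplit := G.isNonMetricCycle_cycleArc_or c hcyc i hgap_inner hgap_outer (k := n - 1 - j)
    (by simpa [hj] using hchord) (by omega)
    (by rwa [show (i : ℕ) + (j - i) + (n - 1 - j) = n - 1 by omega,
      show Fin.ofNat n (n - 1) = ⟨n - 1, by omega⟩ from Fin.ext (Nat.mod_eq_of_lt (by omega))])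
  rw [hj] at hsplit
  refine hsplit.imp (fun h => ?_) id
  convert h using 2 with k
  exact congrArg c (Fin.ext (Nat.mod_eq_of_lt (by omega)).symm)
end

section
/- Let A be a finite set and let f be a symmetric natural-number-valued function on pairs of distinct elements of A. Then there exist a natural number k, a finite set U, and an injective map ψ from A to subsets of U such that: |ψ(x)| = k for every x ∈ A; |ψ(x) ∩ ψ(y)| = f(x,y) for all distinct x, y ∈ A; and every element of U belongs to at most two of the sets ψ(x) (equivalently, ψ(x) ∩ ψ(y) ∩ ψ(z) = ∅ for any three distinct x, y, z). -/
/-!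
Choose `N` larger than every row sum `degree f x = ∑_{y ≠ x} f x y`. Let `ψ x` consist of
`f x y` labelled copies of the edge `s(x, y)` for each `y ≠ x`, padded with `N - degree f x`
points private to `x`, so that `|ψ x| = N`. Two distinct sets share exactly the copies of their
common edge, no point lies in three sets because an edge has only two endpoints, and `ψ` is
injective because `|ψ x ∩ ψ y| = f x y < N`.
-/

open Finset

lemma Finset.disjSum_inter_disjSum {α β : Type*} [DecidableEq α] [DecidableEq β]
    (s s' : Finset α) (t t' : Finset β) :
    s.disjSum t ∩ s'.disjSum t' = (s ∩ s').disjSum (t ∩ t') := by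
  ext (a | b) <;> simp

lemma Function.injective_of_card_inter_lt {A U : Type*} [DecidableEq U] {ψ : A → Finset U}
    {k : ℕ} (hcard : ∀ x, #(ψ x) = k) (hinter : ∀ x y, x ≠ y → #(ψ x ∩ ψ y) < k) :
    Function.Injective ψ := by
  intro x y h
  by_contra hne
  simpa [h, hcard] using hinter x y hne

namespace SetValuedRepresentation

variable {A : Type*} [Fintype A] [DecidableEq A] (f : A → A → ℕ) (N : ℕ)

def degree (x : A) : ℕ := ∑ y ∈ univ.erase x, f x y

def sharedPart (x : A) : Finset (Sym2 A × Fin N) :=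
  (univ.erase x).biUnion fun y =>
    ({s(x, y)} : Finset _) ×ˢ univ.filter fun i : Fin N => (i : ℕ) < f x y

def ownPart (x : A) : Finset (A × Fin N) :=
  ({x} : Finset _) ×ˢ univ.filter fun i : Fin N => (i : ℕ) < N - degree f x

def rep (x : A) : Finset (Sym2 A × Fin N ⊕ A × Fin N) :=
  (sharedPart f N x).disjSum (ownPart f N x)

variable {f N}

lemma le_degree {x y : A} (hxy : x ≠ y) : f x y ≤ degree f x :=
  single_le_sum (fun _ _ => Nat.zero_le _) (mem_erase.2 ⟨hxy.symm, mem_univ y⟩)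

lemma mem_sharedPart {x : A} {s : Sym2 A} {i : Fin N} :
    (s, i) ∈ sharedPart f N x ↔ ∃ y, y ≠ x ∧ (i : ℕ) < f x y ∧ s(x, y) = s := by
  simp [sharedPart]

lemma card_sharedPart {x : A} (hx : degree f x ≤ N) : #(sharedPart f N x) = degree f x := by
  rw [sharedPart, card_biUnion]
  · refine sum_congr rfl fun y hy => ?_
    rw [card_product, card_singleton, one_mul, Fin.card_filter_val_lt,
      min_eq_right ((le_degree (ne_of_mem_erase hy).symm).trans hx)]
  · intro y _ z _ hyz
    exact disjoint_product.2 (Or.inl (disjoint_singleton.2 (Sym2.congr_right.not.2 hyz)))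

lemma card_ownPart (x : A) : #(ownPart f N x) = N - degree f x := by
  rw [ownPart, card_product, card_singleton, one_mul, Fin.card_filter_val_lt,
    min_eq_right (Nat.sub_le _ _)]

lemma card_rep {x : A} (hx : degree f x ≤ N) : #(rep f N x) = N := by
  rw [rep, card_disjSum, card_sharedPart hx, card_ownPart]
  omega

lemma ownPart_inter_ownPart {x y : A} (hxy : x ≠ y) : ownPart f N x ∩ ownPart f N y = ∅ :=
  disjoint_iff_inter_eq_empty.1 (disjoint_product.2 (Or.inl (disjoint_singleton.2 hxy)))

lemma sharedPart_inter_sharedPart (hf : ∀ x y, x ≠ y → f x y = f y x) {x y : A}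
    (hxy : x ≠ y) :
    sharedPart f N x ∩ sharedPart f N y =
      ({s(x, y)} : Finset _) ×ˢ univ.filter fun i : Fin N => (i : ℕ) < f x y := by
  ext ⟨s, i⟩
  simp only [mem_inter, mem_sharedPart, mem_product, mem_singleton, mem_filter, mem_univ,
    true_and]
  constructor
  · rintro ⟨⟨y', -, hi, rfl⟩, ⟨x', -, -, hs⟩⟩
    obtain rfl : y = y' := by
      have hy : y ∈ s(x, y') := hs ▸ Sym2.mem_mk_left y x'
      exact (Sym2.mem_iff.1 hy).resolve_left hxy.symm
    exact ⟨rfl, hi⟩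
  · rintro ⟨rfl, hi⟩
    exact ⟨⟨y, hxy.symm, hi, rfl⟩, ⟨x, hxy, hf x y hxy ▸ hi, Sym2.eq_swap⟩⟩

lemma card_rep_inter_rep (hf : ∀ x y, x ≠ y → f x y = f y x) {x y : A} (hxy : x ≠ y)
    (hN : f x y ≤ N) : #(rep f N x ∩ rep f N y) = f x y := by
  rw [rep, rep, disjSum_inter_disjSum, card_disjSum, sharedPart_inter_sharedPart hf hxy,
    ownPart_inter_ownPart hxy, card_empty, card_product, card_singleton, one_mul,
    Fin.card_filter_val_lt, min_eq_right hN, add_zero]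

lemma rep_inter_rep_inter_rep {x y z : A} (hxy : x ≠ y) (hyz : y ≠ z) (hxz : x ≠ z) :
    rep f N x ∩ rep f N y ∩ rep f N z = ∅ := by
  rw [rep, rep, rep, disjSum_inter_disjSum, disjSum_inter_disjSum, ownPart_inter_ownPart hxy,
    empty_inter, disjSum_eq_empty, eq_empty_iff_forall_notMem]
  refine ⟨fun ⟨s, i⟩ hs => ?_, rfl⟩
  simp only [mem_inter, mem_sharedPart] at hs
  obtain ⟨⟨⟨w, -, -, rfl⟩, ⟨_, -, -, hy⟩⟩, ⟨_, -, -, hz⟩⟩ := hs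
  have hyw : y = w := (Sym2.mem_iff.1 (hy ▸ Sym2.mem_mk_left y _)).resolve_left hxy.symm
  have hzw : z = w := (Sym2.mem_iff.1 (hz ▸ Sym2.mem_mk_left z _)).resolve_left hxz.symm
  exact hyz (hyw.trans hzw.symm)

lemma rep_injective (hf : ∀ x y, x ≠ y → f x y = f y x) (hN : ∀ x, degree f x < N) :
    Function.Injective (rep f N) :=
  Function.injective_of_card_inter_lt (fun x => card_rep (hN x).le) fun x _ hxy =>
    (card_rep_inter_rep hf hxy ((le_degree hxy).trans (hN x).le)).trans_lt
      ((le_degree hxy).trans_lt (hN x))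

end SetValuedRepresentation

open SetValuedRepresentation in
/-- Let `A` be a finite set and `f` a symmetric `ℕ`-valued function on pairs of distinct
elements of `A`. Then there exist `k : ℕ`, a finite set `U` and an injective map `ψ`
from `A` to subsets of `U` such that `|ψ x| = k` for every `x`, `|ψ x ∩ ψ y| = f x y`
for all distinct `x, y`, and every element of `U` belongs to at most two of the sets
`ψ x` (equivalently, any three of the sets have empty common intersection). -/
theorem set_valued_representation {A : Type*} [Fintype A] (f : A → A → ℕ)
    (hf : ∀ x y : A, x ≠ y → f x y = f y x) :
    ∃ (k : ℕ) (U : Type) (_ : Fintype U) (_ : DecidableEq U) (ψ : A → Finset U),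
      Function.Injective ψ ∧
      (∀ x, (ψ x).card = k) ∧
      (∀ x y : A, x ≠ y → (ψ x ∩ ψ y).card = f x y) ∧
      (∀ x y z : A, x ≠ y → y ≠ z → x ≠ z → ψ x ∩ ψ y ∩ ψ z = ∅) := by
  classical
  set N := univ.sup (degree f) + 1
  have hN : ∀ x, degree f x < N := fun x => Nat.lt_succ_of_le (le_sup (mem_univ x))
  -- `rep f N` lives in a universe of `A`; transport it to `Fin _ : Type`.
  let e := Fintype.equivFin (Sym2 A × Fin N ⊕ A × Fin N)
  refine ⟨N, _, inferInstance, inferInstance, fun x => (rep f N x).map e.toEmbedding,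
    (map_injective _).comp (rep_injective hf hN), fun x => ?_, fun x y hxy => ?_,
    fun x y z hxy hyz hxz => ?_⟩
  · rw [card_map, card_rep (hN x).le]
  · rw [← map_inter, card_map, card_rep_inter_rep hf hxy ((le_degree hxy).trans (hN x).le)]
  · rw [← map_inter, ← map_inter, rep_inter_rep_inter_rep hxy hyz hxz, map_empty]
end

section
/- Let U be a finite set, k a natural number, A an index set, and (S_a)_{a ∈ A} a family of pairwise distinct subsets of U, each of size k, such that every element of U belongs to at most two of the sets S_a. Let A₁, A₂ ⊆ A and let σ : A₁ → A₂ be a bijection satisfying |S_a ∩ S_b| = |S_{σ(a)} ∩ S_{σ(b)}| for all a, b ∈ A₁. Then there exists a permutation π of U such that π(S_a) = S_{σ(a)} for every a ∈ A₁. -/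
open Finset

private lemma perm_of_fiber_card_eq {U ι : Type*} [Fintype U] [DecidableEq U]
    [Fintype ι] [DecidableEq ι] (f g : U → ι)
    (h : ∀ i, (Finset.univ.filter fun u => f u = i).card
        = (Finset.univ.filter fun u => g u = i).card) :
    ∃ π : Equiv.Perm U, ∀ u, g (π u) = f u := by
  have e : ∀ i, {u // f u = i} ≃ {u // g u = i} := fun i => by
    apply Fintype.equivOfCardEq
    simpa [Fintype.card_subtype] using h i
  refine ⟨(Equiv.sigmaFiberEquiv f).symm.trans
    ((Equiv.sigmaCongrRight e).trans (Equiv.sigmaFiberEquiv g)), fun u => ?_⟩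
  exact ((e (f u)) ⟨u, rfl⟩).2

private lemma fiber_singleton_card {U ι : Type*} [Fintype U] [DecidableEq U]
    [Fintype ι] [DecidableEq ι] (T : ι → Finset U)
    (hP : ∀ (u : U) (a b c : ι), u ∈ T a → u ∈ T b → u ∈ T c → a = b ∨ a = c ∨ b = c)
    (a : ι) :
    (Finset.univ.filter fun u => (Finset.univ.filter fun b => u ∈ T b) = {a}).card
      = (T a).card - ∑ b ∈ Finset.univ.erase a, (T a ∩ T b).card := by
  set X : Finset U := (Finset.univ.erase a).biUnion (fun b => T a ∩ T b) with hX
  have hXsub : X ⊆ T a := Finset.biUnion_subset.mpr fun b _ => Finset.inter_subset_left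
  have hfibeq : (Finset.univ.filter fun u => (Finset.univ.filter fun b => u ∈ T b) = {a})
      = T a \ X := by
    ext u
    simp only [mem_filter, mem_univ, true_and, mem_sdiff, hX, mem_biUnion, mem_erase,
      mem_inter, not_exists]
    constructor
    · intro h
      have ha : u ∈ T a := by
        have := Finset.mem_singleton_self a
        rw [← h, mem_filter] at this
        exact this.2
      refine ⟨ha, ?_⟩
      rintro b ⟨⟨hba, -⟩, -, hb⟩
      have : b ∈ Finset.univ.filter fun b => u ∈ T b := by
        simp [hb]
      rw [h, mem_singleton] at this
      exact hba this
    · rintro ⟨ha, hn⟩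
      apply Finset.eq_singleton_iff_unique_mem.2
      constructor
      · simp [ha]
      · intro b hb
        rw [mem_filter] at hb
        by_contra hba
        exact hn b ⟨⟨hba, trivial⟩, ha, hb.2⟩
  have hdisj : ∀ b ∈ Finset.univ.erase a, ∀ c ∈ Finset.univ.erase a, b ≠ c →
      Disjoint (T a ∩ T b) (T a ∩ T c) := by
    intro b hb c hc hbc
    rw [Finset.disjoint_left]
    intro u hub huc
    rw [mem_inter] at hub huc
    rcases hP u b c a hub.2 huc.2 hub.1 with h | h | h
    · exact hbc h
    · exact (Finset.mem_erase.1 hb).1 h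
    · exact (Finset.mem_erase.1 hc).1 h
  rw [hfibeq, Finset.card_sdiff_of_subset hXsub, hX, Finset.card_biUnion hdisj]

private lemma fiber_pair {U ι : Type*} [Fintype U] [DecidableEq U] [Fintype ι] [DecidableEq ι]
    (T : ι → Finset U)
    (hP : ∀ (u : U) (a b c : ι), u ∈ T a → u ∈ T b → u ∈ T c → a = b ∨ a = c ∨ b = c)
    {a b : ι} (hab : a ≠ b) :
    (Finset.univ.filter fun u => (Finset.univ.filter fun c => u ∈ T c) = {a, b})
      = T a ∩ T b := by
  ext u
  simp only [mem_filter, mem_univ, true_and, mem_inter]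
  constructor
  · intro h
    have ha : a ∈ Finset.univ.filter fun c => u ∈ T c := by
      rw [h]; exact mem_insert_self a {b}
    have hb : b ∈ Finset.univ.filter fun c => u ∈ T c := by
      rw [h]; exact mem_insert_of_mem (mem_singleton_self b)
    rw [mem_filter] at ha hb
    exact ⟨ha.2, hb.2⟩
  · rintro ⟨ha, hb⟩
    apply Finset.Subset.antisymm
    · intro c hc
      rw [mem_filter] at hc
      rcases hP u c a b hc.2 ha hb with h | h | h
      · simp [h]
      · simp [h]
      · exact absurd h hab
    · intro c hc
      rw [mem_insert, mem_singleton] at hc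
      rcases hc with rfl | rfl <;> simp [ha, hb]

private lemma fiber_big_empty {U ι : Type*} [Fintype U] [DecidableEq U] [Fintype ι] [DecidableEq ι]
    (T : ι → Finset U)
    (hP : ∀ (u : U) (a b c : ι), u ∈ T a → u ∈ T b → u ∈ T c → a = b ∨ a = c ∨ b = c)
    {s : Finset ι} (hs : 2 < s.card) :
    (Finset.univ.filter fun u => (Finset.univ.filter fun c => u ∈ T c) = s) = ∅ := by
  rw [Finset.filter_eq_empty_iff]
  intro u _
  intro h
  obtain ⟨a, ha, b, hb, c, hc, hab, hac, hbc⟩ := Finset.two_lt_card.1 hs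
  rw [← h, mem_filter] at ha hb hc
  rcases hP u a b c ha.2 hb.2 hc.2 with h' | h' | h'
  · exact hab h'
  · exact hac h'
  · exact hbc h'

/-- Let `U` be a finite set and `(S a)_{a ∈ A}` a family of pairwise distinct `k`-element
subsets of `U` such that every element of `U` belongs to at most two of the sets.
If `σ : A₁ ≃ A₂` is a bijection between two subsets of the index set preserving the
cardinalities of pairwise intersections, then there is a permutation `π` of `U` with
`π (S a) = S (σ a)` for every `a ∈ A₁`. -/
theorem extend_partial_map_of_set_system {U : Type*} [Fintype U] [DecidableEq U]
    {A : Type*} (k : ℕ) (S : A → Finset U)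
    (hS : Function.Injective S)
    (hcard : ∀ a, (S a).card = k)
    (htwo : ∀ (u : U) (a b c : A), u ∈ S a → u ∈ S b → u ∈ S c → a = b ∨ a = c ∨ b = c)
    (A₁ A₂ : Set A) (σ : A₁ ≃ A₂)
    (hσ : ∀ a b : A₁, (S a.1 ∩ S b.1).card = (S (σ a).1 ∩ S (σ b).1).card) :
    ∃ π : Equiv.Perm U, ∀ a : A₁, (S a.1).image π = S (σ a).1 := by
  classical
  have hfinA : Finite A := Finite.of_injective S hS
  haveI : Fintype A := Fintype.ofFinite A
  haveI : Fintype ↥A₁ := Fintype.ofFinite _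
  set T₁ : ↥A₁ → Finset U := fun a => S a.1 with hT₁
  set T₂ : ↥A₁ → Finset U := fun a => S (σ a).1 with hT₂
  have hP₁ : ∀ (u : U) (a b c : ↥A₁), u ∈ T₁ a → u ∈ T₁ b → u ∈ T₁ c →
      a = b ∨ a = c ∨ b = c := by
    intro u a b c ha hb hc
    rcases htwo u a.1 b.1 c.1 ha hb hc with h | h | h
    · exact Or.inl (Subtype.coe_injective h)
    · exact Or.inr (Or.inl (Subtype.coe_injective h))
    · exact Or.inr (Or.inr (Subtype.coe_injective h))
  have hP₂ : ∀ (u : U) (a b c : ↥A₁), u ∈ T₂ a → u ∈ T₂ b → u ∈ T₂ c →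
      a = b ∨ a = c ∨ b = c := by
    intro u a b c ha hb hc
    rcases htwo u (σ a).1 (σ b).1 (σ c).1 ha hb hc with h | h | h
    · exact Or.inl (σ.injective (Subtype.coe_injective h))
    · exact Or.inr (Or.inl (σ.injective (Subtype.coe_injective h)))
    · exact Or.inr (Or.inr (σ.injective (Subtype.coe_injective h)))
  set f : U → Finset ↥A₁ := fun u => Finset.univ.filter fun a => u ∈ T₁ a with hf
  set g : U → Finset ↥A₁ := fun u => Finset.univ.filter fun a => u ∈ T₂ a with hg
  have hfib1 : ∀ s : Finset ↥A₁, s.Nonempty →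
      (Finset.univ.filter fun u => f u = s).card
        = (Finset.univ.filter fun u => g u = s).card := by
    intro s hs
    by_cases h1 : s.card = 1
    · obtain ⟨a, rfl⟩ := Finset.card_eq_one.1 h1
      rw [hf, hg, fiber_singleton_card T₁ hP₁ a, fiber_singleton_card T₂ hP₂ a]
      have hsum : ∑ b ∈ Finset.univ.erase a, (T₁ a ∩ T₁ b).card
          = ∑ b ∈ Finset.univ.erase a, (T₂ a ∩ T₂ b).card :=
        Finset.sum_congr rfl fun b _ => hσ a b
      rw [hsum, hT₁, hT₂, hcard, hcard]
    · by_cases h2 : s.card = 2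
      · obtain ⟨a, b, hab, rfl⟩ := Finset.card_eq_two.1 h2
        rw [hf, hg, fiber_pair T₁ hP₁ hab, fiber_pair T₂ hP₂ hab]
        exact hσ a b
      · have h3 : 2 < s.card := by
          have := hs.card_pos
          omega
        rw [hf, hg, fiber_big_empty T₁ hP₁ h3, fiber_big_empty T₂ hP₂ h3]
  have hfib : ∀ s : Finset ↥A₁,
      (Finset.univ.filter fun u => f u = s).card
        = (Finset.univ.filter fun u => g u = s).card := by
    intro s
    rcases s.eq_empty_or_nonempty with rfl | hs
    · have h1 := Finset.card_eq_sum_card_fiberwise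
        (f := f) (s := Finset.univ) (t := Finset.univ) (fun x _ => mem_univ _)
      have h2 := Finset.card_eq_sum_card_fiberwise
        (f := g) (s := Finset.univ) (t := Finset.univ) (fun x _ => mem_univ _)
      rw [← Finset.add_sum_erase _ _ (Finset.mem_univ (∅ : Finset ↥A₁))] at h1 h2
      have hrest : ∑ s ∈ Finset.univ.erase (∅ : Finset ↥A₁),
            (Finset.univ.filter fun u => f u = s).card
          = ∑ s ∈ Finset.univ.erase (∅ : Finset ↥A₁),
            (Finset.univ.filter fun u => g u = s).card :=
        Finset.sum_congr rfl fun t ht =>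
          hfib1 t (Finset.nonempty_of_ne_empty (Finset.ne_of_mem_erase ht))
      omega
    · exact hfib1 s hs
  obtain ⟨π, hπ⟩ := perm_of_fiber_card_eq f g hfib
  refine ⟨π, fun a => ?_⟩
  have hsub : (S a.1).image π ⊆ S (σ a).1 := by
    intro u hu
    rw [Finset.mem_image] at hu
    obtain ⟨v, hv, rfl⟩ := hu
    have h1 : a ∈ f v := by simp [hf, hT₁, hv]
    rw [← hπ v] at h1
    rw [hg, mem_filter] at h1
    exact h1.2
  apply Finset.eq_of_subset_of_card_le hsub
  rw [Finset.card_image_of_injective _ π.injective, hcard, hcard]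
end

section
/- For every finite ℝ>0-edge-labelled graph A whose set of edge labels is {s_1, ..., s_n} (pairwise distinct), there exist a natural number k, a finite set U, and an injective map ψ from the vertices of A to k-element subsets of U such that for all distinct vertices x, y: if x and y are joined by an edge of label s_j then |ψ(x) ∩ ψ(y)| = j, and if x and y are not joined by an edge then ψ(x) ∩ ψ(y) = ∅. Consequently ψ is an embedding of A as an induced subgraph into the edge-labelled graph B whose vertices are all k-element subsets of U, with distinct X, Y joined by an edge of label s_i if and only if |X ∩ Y| = i for some 1 ≤ i ≤ n. -/
open scoped Classical

namespace SetRepAux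

variable {VA : Type*} [Fintype VA] (A : ELGraph VA) {n : ℕ} (s : Fin n → ℝ)

/-- intended intersection size: `j+1` if adjacent with label `s j`, else `0`. -/
noncomputable def J (x y : VA) : ℕ :=
  if h : A.Adj x y ∧ ∃ j : Fin n, A.label x y = s j then (Classical.choose h.2).1 + 1 else 0

noncomputable def w (x : VA) : ℕ := ∑ y, J A s x y

noncomputable def kk : ℕ := Finset.univ.sup (w A s) + 1

noncomputable def ee : VA ≃ Fin (Fintype.card VA) := Fintype.equivFin VA

noncomputable def op (x y : VA) : Fin (Fintype.card VA) × Fin (Fintype.card VA) :=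
  if ee x ≤ ee y then (ee x, ee y) else (ee y, ee x)

abbrev UU : Type := Fin (Fintype.card VA) × Fin (Fintype.card VA) × Fin (kk A s)

/-- private part -/
noncomputable def P (x : VA) : Finset (UU A s (VA := VA)) :=
  Finset.univ.filter fun u =>
    u.1 = ee x ∧ u.2.1 = ee x ∧ u.2.2.1 < kk A s - w A s x

/-- shared part for the pair `x, y` -/
noncomputable def S (x y : VA) : Finset (UU A s (VA := VA)) :=
  Finset.univ.filter fun u =>
    A.Adj x y ∧ (u.1, u.2.1) = op x y ∧ u.2.2.1 < J A s x y

noncomputable def psi (x : VA) : Finset (UU A s (VA := VA)) :=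
  P A s x ∪ Finset.univ.biUnion (S A s x)

variable {A s}

lemma J_eq (hs : Function.Injective s) {x y : VA} (h : A.Adj x y) {j : Fin n}
    (hj : A.label x y = s j) : J A s x y = (j : ℕ) + 1 := by
  have hex : A.Adj x y ∧ ∃ j : Fin n, A.label x y = s j := ⟨h, j, hj⟩
  rw [J, dif_pos hex]
  have := Classical.choose_spec hex.2
  have : Classical.choose hex.2 = j := hs (by rw [← this, ← hj])
  rw [this]

lemma J_eq_zero {x y : VA} (h : ¬ A.Adj x y) : J A s x y = 0 := by
  rw [J, dif_neg]; tauto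

lemma J_symm (hs : Function.Injective s)
    (hspec : ∀ x y, A.Adj x y → ∃ j : Fin n, A.label x y = s j) (x y : VA) :
    J A s x y = J A s y x := by
  by_cases h : A.Adj x y
  · obtain ⟨j, hj⟩ := hspec x y h
    rw [J_eq hs h hj, J_eq hs (A.adj_symm x y h) (by rw [A.label_symm y x]; exact hj)]
  · rw [J_eq_zero h, J_eq_zero (fun h' => h (A.adj_symm y x h'))]

lemma J_le_w (x y : VA) : J A s x y ≤ w A s x :=
  Finset.single_le_sum (fun _ _ => Nat.zero_le _) (Finset.mem_univ y)

lemma w_lt_kk (x : VA) : w A s x < kk A s :=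
  Nat.lt_succ_of_le (Finset.le_sup (Finset.mem_univ x))

lemma op_comm (x y : VA) : op (VA := VA) x y = op y x := by
  unfold op
  rcases lt_trichotomy (ee (VA := VA) x) (ee y) with h | h | h
  · rw [if_pos h.le, if_neg (not_le.mpr h)]
  · simp [h]
  · rw [if_neg (not_le.mpr h), if_pos h.le]

lemma op_fst_ne_snd {x y : VA} (h : x ≠ y) : (op (VA := VA) x y).1 ≠ (op x y).2 := by
  have hne : ee (VA := VA) x ≠ ee y := fun hc => h ((ee (VA := VA)).injective hc)
  unfold op; split
  · exact hne
  · exact hne.symm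

lemma op_inj {x y x' y' : VA} (h : op (VA := VA) x y = op x' y') :
    (x = x' ∧ y = y') ∨ (x = y' ∧ y = x') := by
  have einj : Function.Injective (ee (VA := VA)) := (ee (VA := VA)).injective
  unfold op at h
  split_ifs at h <;> rw [Prod.ext_iff] at h
  · exact Or.inl ⟨einj h.1, einj h.2⟩
  · exact Or.inr ⟨einj h.1, einj h.2⟩
  · exact Or.inr ⟨einj h.2, einj h.1⟩
  · exact Or.inl ⟨einj h.2, einj h.1⟩

lemma card_fin_filter_lt (k m : ℕ) (h : m ≤ k) :
    (Finset.univ.filter fun t : Fin k => t.1 < m).card = m := by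
  have : (Finset.univ.filter fun t : Fin k => t.1 < m) = (Finset.range m).attachFin
      (fun a ha => lt_of_lt_of_le (Finset.mem_range.mp ha) h) := by
    ext t; simp [Finset.mem_attachFin]
  rw [this, Finset.card_attachFin, Finset.card_range]

lemma card_P (x : VA) : (P A s x).card = kk A s - w A s x := by
  have hP : P A s x = {ee (VA := VA) x} ×ˢ ({ee (VA := VA) x} ×ˢ
      (Finset.univ.filter fun t : Fin (kk A s) => t.1 < kk A s - w A s x)) := by
    ext ⟨a, b, t⟩
    simp only [P, Finset.mem_product, Finset.mem_filter, Finset.mem_univ, true_and,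
      Finset.mem_singleton]
  rw [hP]
  simp [Finset.card_product, card_fin_filter_lt _ _ (Nat.sub_le (kk A s) (w A s x))]

lemma S_empty {x y : VA} (h : ¬ A.Adj x y) : S A s x y = ∅ := by
  ext u; simp [S, h]

lemma card_S {x y : VA} (h : A.Adj x y) : (S A s x y).card = J A s x y := by
  have hS : S A s x y = {(op (VA := VA) x y).1} ×ˢ ({(op (VA := VA) x y).2} ×ˢ
      (Finset.univ.filter fun t : Fin (kk A s) => t.1 < J A s x y)) := by
    ext ⟨a, b, t⟩
    simp only [S, Finset.mem_product, Finset.mem_filter, Finset.mem_univ, true_and,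
      Finset.mem_singleton, Prod.ext_iff, h]
    aesop
  rw [hS]
  simp [Finset.card_product, card_fin_filter_lt _ _ ((J_le_w x y).trans (w_lt_kk x).le)]

lemma mem_P_iff {x : VA} {u : UU A s (VA := VA)} :
    u ∈ P A s x ↔ u.1 = ee (VA := VA) x ∧ u.2.1 = ee (VA := VA) x ∧
      u.2.2.1 < kk A s - w A s x := by
  simp [P]

lemma mem_S_iff {x y : VA} {u : UU A s (VA := VA)} :
    u ∈ S A s x y ↔ A.Adj x y ∧ (u.1, u.2.1) = op (VA := VA) x y ∧ u.2.2.1 < J A s x y := by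
  simp [S]

lemma disjoint_P_S (x y z : VA) : Disjoint (P A s x) (S A s y z) := by
  rw [Finset.disjoint_left]
  intro u hu hu'
  rw [mem_P_iff] at hu
  rw [mem_S_iff] at hu'
  obtain ⟨hadj, hop, -⟩ := hu'
  have hyz : y ≠ z := fun hc => A.adj_irrefl y (hc ▸ hadj)
  have := op_fst_ne_snd hyz
  rw [← hop] at this
  exact this (hu.1.trans hu.2.1.symm)

lemma S_inj {x y z : VA} (hy : A.Adj x y) (hz : A.Adj x z)
    (h : op (VA := VA) x y = op (VA := VA) x z) : y = z := by
  rcases op_inj h with ⟨-, h2⟩ | ⟨h1, -⟩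
  · exact h2
  · exact absurd (h1 ▸ hz) (A.adj_irrefl x)

lemma disjoint_S_S {x y z : VA} (hyz : y ≠ z) : Disjoint (S A s x y) (S A s x z) := by
  rw [Finset.disjoint_left]
  intro u hu hu'
  rw [mem_S_iff] at hu hu'
  exact hyz (S_inj hu.1 hu'.1 (hu.2.1.symm.trans hu'.2.1))

lemma card_psi (x : VA) : (psi A s x).card = kk A s := by
  rw [psi, Finset.card_union_of_disjoint, card_P, Finset.card_biUnion]
  · have : ∀ y ∈ Finset.univ, (S A s x y).card = J A s x y := by
      intro y _
      by_cases h : A.Adj x y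
      · exact card_S h
      · rw [S_empty h, J_eq_zero h, Finset.card_empty]
    rw [Finset.sum_congr rfl this]
    exact Nat.sub_add_cancel (w_lt_kk x).le
  · exact fun y _ z _ hyz => disjoint_S_S hyz
  · rw [Finset.disjoint_biUnion_right]
    exact fun y _ => disjoint_P_S x x y

lemma S_subset_psi (x y : VA) : S A s x y ⊆ psi A s x := fun u hu =>
  Finset.mem_union_right _ (Finset.mem_biUnion.mpr ⟨y, Finset.mem_univ y, hu⟩)

lemma psi_inter (hs : Function.Injective s)
    (hspec : ∀ x y, A.Adj x y → ∃ j : Fin n, A.label x y = s j)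
    {x y : VA} (hxy : x ≠ y) : psi A s x ∩ psi A s y = S A s x y := by
  ext u
  simp only [Finset.mem_inter]
  constructor
  · rintro ⟨hx, hy⟩
    rw [psi, Finset.mem_union, Finset.mem_biUnion] at hx hy
    rcases hx with hx | ⟨z, -, hx⟩ <;> rcases hy with hy | ⟨z', -, hy⟩
    · rw [mem_P_iff] at hx hy
      exact absurd ((ee (VA := VA)).injective (hx.1.symm.trans hy.1)) hxy
    · rw [mem_P_iff] at hx
      rw [mem_S_iff] at hy
      have hne : y ≠ z' := fun hc => A.adj_irrefl y (hc ▸ hy.1)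
      have := op_fst_ne_snd hne
      rw [← hy.2.1] at this
      exact absurd (hx.1.trans hx.2.1.symm) this
    · rw [mem_P_iff] at hy
      rw [mem_S_iff] at hx
      have hne : x ≠ z := fun hc => A.adj_irrefl x (hc ▸ hx.1)
      have := op_fst_ne_snd hne
      rw [← hx.2.1] at this
      exact absurd (hy.1.trans hy.2.1.symm) this
    · rw [mem_S_iff] at hx hy
      have hop : op (VA := VA) x z = op (VA := VA) y z' :=
        hx.2.1.symm.trans hy.2.1
      rcases op_inj hop with ⟨h1, -⟩ | ⟨h1, h2⟩
      · exact absurd h1 hxy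
      · subst h2
        exact mem_S_iff.mpr hx
  · intro hu
    refine ⟨S_subset_psi x y hu, S_subset_psi y x ?_⟩
    rw [mem_S_iff] at hu ⊢
    exact ⟨A.adj_symm x y hu.1, by rw [hu.2.1, op_comm],
      by rw [← J_symm hs hspec]; exact hu.2.2⟩

lemma psi_injective (hs : Function.Injective s)
    (hspec : ∀ x y, A.Adj x y → ∃ j : Fin n, A.label x y = s j) :
    Function.Injective (psi A s) := by
  intro x y h
  by_contra hxy
  have hkpos : 0 < kk A s := Nat.succ_pos _
  have hpad : 0 < kk A s - w A s x := Nat.sub_pos_of_lt (w_lt_kk x)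
  have hmem : (⟨ee (VA := VA) x, ee (VA := VA) x, ⟨0, hkpos⟩⟩ : UU A s (VA := VA)) ∈
      psi A s x :=
    Finset.mem_union_left _ (mem_P_iff.mpr ⟨rfl, rfl, hpad⟩)
  rw [h, psi, Finset.mem_union, Finset.mem_biUnion] at hmem
  rcases hmem with hm | ⟨z, -, hm⟩
  · rw [mem_P_iff] at hm
    exact hxy ((ee (VA := VA)).injective hm.1)
  · rw [mem_S_iff] at hm
    have hne : y ≠ z := fun hc => A.adj_irrefl y (hc ▸ hm.1)
    have := op_fst_ne_snd hne
    rw [← hm.2.1] at this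
    exact this rfl

end SetRepAux

/-- For every finite `ℝ>0`-edge-labelled graph `A` whose set of edge labels is
`{s 0, …, s (n-1)}` (pairwise distinct), there are `k : ℕ`, a finite set `U` and an
injective map `ψ` from the vertices of `A` to `k`-element subsets of `U` such that for
distinct vertices `x, y`: if `x, y` are joined by an edge of label `s j` then
`|ψ x ∩ ψ y| = j + 1` (the label of index `j` is the `(j+1)`-st label `s_{j+1}` in
1-based indexing), and if `x, y` are not joined by an edge then `ψ x ∩ ψ y = ∅`.
Consequently `ψ` is an embedding of `A` as an induced subgraph into the edge-labelled
graph `B` whose vertices are all `k`-element subsets of `U`, with distinct `X, Y` joined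
by an edge of label `s i` if and only if `|X ∩ Y| = i + 1`. -/
theorem set_representation_of_edge_labelled_graph {VA : Type*} [Fintype VA]
    (A : ELGraph VA) {n : ℕ} (s : Fin n → ℝ) (hs : Function.Injective s)
    (hspec : ∀ x y, A.Adj x y → ∃ j : Fin n, A.label x y = s j)
    (hsurj : ∀ j : Fin n, ∃ x y, A.Adj x y ∧ A.label x y = s j) :
    ∃ (k : ℕ) (U : Type) (_ : Fintype U) (_ : DecidableEq U) (ψ : VA → Finset U)
      (hψcard : ∀ x, (ψ x).card = k),
      Function.Injective ψ ∧
      (∀ x y : VA, x ≠ y → ∀ j : Fin n, A.Adj x y → A.label x y = s j →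
        (ψ x ∩ ψ y).card = (j : ℕ) + 1) ∧
      (∀ x y : VA, x ≠ y → ¬ A.Adj x y → ψ x ∩ ψ y = ∅) ∧
      ∃ B : ELGraph {X : Finset U // X.card = k},
        (∀ X Y : {X : Finset U // X.card = k},
          B.Adj X Y ↔ X ≠ Y ∧ ∃ i : Fin n, (X.1 ∩ Y.1).card = (i : ℕ) + 1) ∧
        (∀ (X Y : {X : Finset U // X.card = k}) (i : Fin n),
          X ≠ Y → (X.1 ∩ Y.1).card = (i : ℕ) + 1 → B.label X Y = s i) ∧
        A.IsEmbedding B (fun x => ⟨ψ x, hψcard x⟩) := by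
  classical
  open SetRepAux in
  refine ⟨kk A s, UU A s, inferInstance, inferInstance, psi A s,
    fun x => card_psi x, psi_injective hs hspec, ?_, ?_, ?_⟩
  · intro x y hxy j hadj hlab
    rw [psi_inter hs hspec hxy, card_S hadj, J_eq hs hadj hlab]
  · intro x y hxy hnadj
    rw [psi_inter hs hspec hxy, S_empty hnadj]
  · set k := kk A s with hk
    refine ⟨{
        Adj := fun X Y => X ≠ Y ∧ ∃ i : Fin n, (X.1 ∩ Y.1).card = (i : ℕ) + 1
        label := fun X Y =>
          if h : ∃ i : Fin n, (X.1 ∩ Y.1).card = (i : ℕ) + 1 then s (Classical.choose h)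
          else 0
        adj_symm := ?_
        adj_irrefl := ?_
        label_symm := ?_
        label_pos := ?_ }, fun X Y => Iff.rfl, ?_, ?_, ?_⟩
    · rintro X Y ⟨hne, i, hi⟩
      exact ⟨hne.symm, i, by rwa [Finset.inter_comm]⟩
    · rintro X ⟨hne, -⟩
      exact hne rfl
    · intro X Y
      conv_lhs => rw [Finset.inter_comm]
    · rintro X Y ⟨hne, hex⟩
      rw [dif_pos hex]
      obtain ⟨a, b, hadj, hlab⟩ := hsurj (Classical.choose hex)
      exact hlab ▸ A.label_pos a b hadj
    · intro X Y i hne hcard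
      have hex : ∃ i : Fin n, (X.1 ∩ Y.1).card = (i : ℕ) + 1 := ⟨i, hcard⟩
      show (if h : ∃ i : Fin n, (X.1 ∩ Y.1).card = (i : ℕ) + 1 then s (Classical.choose h)
        else 0) = s i
      rw [dif_pos hex]
      have h1 := Classical.choose_spec hex
      have h2 : (Classical.choose hex).1 = (i : ℕ) :=
        Nat.add_right_cancel (h1.symm.trans hcard)
      exact congrArg s (Fin.ext h2)
    · intro a b h
      exact psi_injective hs hspec (congrArg Subtype.val h)
    · intro x y
      have hA : A.Adj x y → x ≠ y := fun h hc => A.adj_irrefl x (hc ▸ h)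
      constructor
      · constructor
        · intro h
          have hxy := hA h
          obtain ⟨j, hj⟩ := hspec x y h
          refine ⟨fun hc => hxy (psi_injective hs hspec (congrArg Subtype.val hc)),
            j, ?_⟩
          show (psi A s x ∩ psi A s y).card = _
          rw [psi_inter hs hspec hxy, card_S h, J_eq hs h hj]
        · rintro ⟨hne, i, hi⟩
          have hxy : x ≠ y := fun hc => hne (by subst hc; rfl)
          by_contra hnadj
          rw [show ((⟨psi A s x, card_psi x⟩ : {X : Finset (UU A s (VA := VA)) // X.card = k}) :
            Finset (UU A s (VA := VA))) ∩ (⟨psi A s y, card_psi y⟩ :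
            {X : Finset (UU A s (VA := VA)) // X.card = k}).1 = psi A s x ∩ psi A s y from rfl,
            psi_inter hs hspec hxy, S_empty hnadj] at hi
          simp at hi
      · intro h
        have hxy := hA h
        obtain ⟨j, hj⟩ := hspec x y h
        have hcard : (psi A s x ∩ psi A s y).card = (j : ℕ) + 1 := by
          rw [psi_inter hs hspec hxy, card_S h, J_eq hs h hj]
        have hex : ∃ i : Fin n, (psi A s x ∩ psi A s y).card = (i : ℕ) + 1 := ⟨j, hcard⟩
        show (if h : ∃ i : Fin n, (psi A s x ∩ psi A s y).card = (i : ℕ) + 1 then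
          s (Classical.choose h) else 0) = A.label x y
        rw [dif_pos hex]
        have h1 := Classical.choose_spec hex
        have h2 : (Classical.choose hex).1 = (j : ℕ) :=
          Nat.add_right_cancel (h1.symm.trans hcard)
        rw [congrArg s (Fin.ext h2)]
        exact hj.symm
end
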